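/- arXiv:1702.05741 — 7 statements merged into one kernel-verified Lean document; each statement's English description precedes it below -/
import Mathlib

section
/- For any linear code, the function Φ(x) (the minimum size of the union of x regenerating sets having a nontrivial union) satisfies Φ(x+1) ≥ Φ(x) + 1 for all x where both are defined; consequently x ↦ Φ(x) − x is nondecreasing. -/
open scoped Classical

/-- `R` is a regenerating set of coordinate `i` for the code with generator matrix `G`:
`i ∈ R` and the `i`-th column of `G` is a linear combination of the columns indexed by `R \ {i}`. -/
def regenSet {𝔽 : Type*} [Field 𝔽] {m n : ℕ} (G : Matrix (Fin m) (Fin n) 𝔽)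
    (i : Fin n) (R : Finset (Fin n)) : Prop :=
  i ∈ R ∧ (fun t => G t i) ∈ Submodule.span 𝔽 ((fun j => fun t => G t j) '' ↑(R.erase i))

/-- A sequence of regenerating sets `R j` of coordinates `l j` with a nontrivial union. -/
def ntUnion {𝔽 : Type*} [Field 𝔽] {m n : ℕ} (G : Matrix (Fin m) (Fin n) 𝔽) (x : ℕ)
    (l : Fin x → Fin n) (R : Fin x → Finset (Fin n)) : Prop :=
  (∀ j, regenSet G (l j) (R j)) ∧ ∀ j j' : Fin x, j' < j → l j ∉ R j'

/-- `Φ(x)`: minimum size of the union of `x` regenerating sets having a nontrivial union. -/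
noncomputable def Phi {𝔽 : Type*} [Field 𝔽] {m n : ℕ} (G : Matrix (Fin m) (Fin n) 𝔽)
    (x : ℕ) : ℕ :=
  sInf {c | ∃ (l : Fin x → Fin n) (R : Fin x → Finset (Fin n)),
    ntUnion G x l R ∧ (Finset.univ.biUnion R).card = c}

/-- `ρ = max { x : Φ(x) − x < k }` (over those `x` where `Φ` is defined). -/
noncomputable def rho {𝔽 : Type*} [Field 𝔽] {m n : ℕ} (G : Matrix (Fin m) (Fin n) 𝔽)
    (k : ℕ) : ℕ :=
  sSup {x | (∃ (l : Fin x → Fin n) (R : Fin x → Finset (Fin n)), ntUnion G x l R) ∧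
    Phi G x - x < k}

/-- The linear code generated by the rows of `G`. -/
def rowCode {𝔽 : Type*} [Field 𝔽] {m n : ℕ} (G : Matrix (Fin m) (Fin n) 𝔽) :
    Submodule 𝔽 (Fin n → 𝔽) :=
  Submodule.span 𝔽 (Set.range fun t => G t)

/-- Hamming weight of a vector. -/
noncomputable def wt {𝔽 : Type*} [Field 𝔽] {n : ℕ} (c : Fin n → 𝔽) : ℕ :=
  (Finset.univ.filter fun j => c j ≠ 0).card

/-- Minimum (Hamming) distance of a linear code. -/
noncomputable def minDist {𝔽 : Type*} [Field 𝔽] {n : ℕ} (C : Submodule 𝔽 (Fin n → 𝔽)) : ℕ :=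
  sInf {w | ∃ c ∈ C, c ≠ 0 ∧ wt c = w}

/-- Membership in the dual code `C⊥`. -/
def inDual {𝔽 : Type*} [Field 𝔽] {n : ℕ} (C : Submodule 𝔽 (Fin n → 𝔽))
    (e : Fin n → 𝔽) : Prop :=
  ∀ c ∈ C, ∑ j, e j * c j = 0

/-- Ceiling of natural division: `cdiv a b = ⌈a / b⌉`. -/
def cdiv (a b : ℕ) : ℕ := (a + b - 1) / b

/-- All coordinates in `T` have `(r, δ)`-locality (Definition 3.1/3.2). -/
def hasLocality {𝔽 : Type*} [Field 𝔽] {m n : ℕ} (G : Matrix (Fin m) (Fin n) 𝔽)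
    (T : Finset (Fin n)) (r δ : ℕ) : Prop :=
  ∀ ι ∈ T, ∃ S ⊆ T, ι ∈ S ∧ δ ≤ S.card ∧ S.card ≤ r + δ - 1 ∧
    ∀ E ⊆ S, E.card = δ - 1 → ∀ j ∈ E, regenSet G j ((S \ E) ∪ {j})

/-!
Dropping the last set from a nontrivial union of `x + 1` regenerating sets of minimal size leaves
a nontrivial union of `x` regenerating sets. Its union misses the last coordinate `l (x + 1)`,
which nontriviality keeps out of the earlier sets while it lies in the last one, so it is
strictly smaller.
-/

section NontrivialUnion

variable {𝔽 : Type*} [Field 𝔽] {m n : ℕ} (G : Matrix (Fin m) (Fin n) 𝔽) {x : ℕ}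

theorem Phi_le_card_biUnion {l : Fin x → Fin n} {R : Fin x → Finset (Fin n)}
    (h : ntUnion G x l R) : Phi G x ≤ (Finset.univ.biUnion R).card :=
  Nat.sInf_le ⟨l, R, h, rfl⟩

theorem exists_ntUnion_card_biUnion_eq_Phi
    (h : ∃ (l : Fin x → Fin n) (R : Fin x → Finset (Fin n)), ntUnion G x l R) :
    ∃ (l : Fin x → Fin n) (R : Fin x → Finset (Fin n)),
      ntUnion G x l R ∧ (Finset.univ.biUnion R).card = Phi G x := by
  obtain ⟨l, R, h⟩ := h
  have hne : Set.Nonempty {c | ∃ (l : Fin x → Fin n) (R : Fin x → Finset (Fin n)),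
      ntUnion G x l R ∧ (Finset.univ.biUnion R).card = c} := ⟨_, l, R, h, rfl⟩
  exact Nat.sInf_mem hne

variable {G}

theorem ntUnion.init {l : Fin (x + 1) → Fin n} {R : Fin (x + 1) → Finset (Fin n)}
    (h : ntUnion G (x + 1) l R) : ntUnion G x (Fin.init l) (Fin.init R) :=
  ⟨fun j => h.1 j.castSucc, fun j j' hlt => h.2 j.castSucc j'.castSucc (by simpa using hlt)⟩

theorem ntUnion.card_biUnion_init_lt {l : Fin (x + 1) → Fin n} {R : Fin (x + 1) → Finset (Fin n)}
    (h : ntUnion G (x + 1) l R) :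
    (Finset.univ.biUnion (Fin.init R)).card < (Finset.univ.biUnion R).card := by
  apply Finset.card_lt_card
  rw [Finset.ssubset_iff_of_subset]
  · refine ⟨l (Fin.last x), Finset.mem_biUnion.2 ⟨_, Finset.mem_univ _, (h.1 _).1⟩, ?_⟩
    simp only [Finset.mem_biUnion, Finset.mem_univ, true_and, not_exists]
    exact fun j => h.2 _ _ (Fin.castSucc_lt_last j)
  · intro a ha
    obtain ⟨j, -, haj⟩ := Finset.mem_biUnion.1 ha
    exact Finset.mem_biUnion.2 ⟨j.castSucc, Finset.mem_univ _, haj⟩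

end NontrivialUnion

theorem phi_strict_mono_general {𝔽 : Type*} [Field 𝔽] {m n : ℕ} (G : Matrix (Fin m) (Fin n) 𝔽)
    (x : ℕ)
    (hdefx1 : ∃ (l : Fin (x+1) → Fin n) (R : Fin (x+1) → Finset (Fin n)), ntUnion G (x+1) l R) :
    Phi G x + 1 ≤ Phi G (x+1) ∧ Phi G x - x ≤ Phi G (x+1) - (x+1) := by
  obtain ⟨l, R, h, hcard⟩ := exists_ntUnion_card_biUnion_eq_Phi G hdefx1
  have hinit := Phi_le_card_biUnion G h.init
  have hlt := h.card_biUnion_init_lt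
  omega

/-- `Φ(x+1) ≥ Φ(x) + 1` wherever both are defined; consequently
`x ↦ Φ(x) − x` is nondecreasing. -/
theorem phi_strict_mono {𝔽 : Type*} [Field 𝔽] {m n : ℕ} (G : Matrix (Fin m) (Fin n) 𝔽)
    (x : ℕ)
    (hdefx : ∃ (l : Fin x → Fin n) (R : Fin x → Finset (Fin n)), ntUnion G x l R)
    (hdefx1 : ∃ (l : Fin (x+1) → Fin n) (R : Fin (x+1) → Finset (Fin n)), ntUnion G (x+1) l R) :
    Phi G x + 1 ≤ Phi G (x+1) ∧ Phi G x - x ≤ Phi G (x+1) - (x+1) :=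
  phi_strict_mono_general G x hdefx1
end

section
/- If R_1,…,R_x are regenerating sets of coordinates l_1,…,l_x with a nontrivial union, then the corresponding dual codewords e_1,…,e_x (with supp(e_j) = R_j) are linearly independent over F_q; in particular x ≤ n − k. -/
/-! Evaluating `e_i` at `l_j` gives a lower triangular matrix with nonzero diagonal: `l_j ∈ R_j`,
while `l_j ∉ R_i` for `i < j`. Its nonzero determinant makes the `e_j` independent, and they lie
in the kernel of the generator matrix, of dimension `n - k` by rank–nullity. -/

open scoped Classical

theorem linearIndependent_of_isLowerTriangular {R ι α : Type*} [CommRing R] [IsDomain R]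
    [Fintype ι] [LinearOrder ι] (v : ι → α → R) (l : ι → α)
    (hdiag : ∀ i, v i (l i) ≠ 0) (hlower : ∀ i j, i < j → v i (l j) = 0) :
    LinearIndependent R v := by
  set M : Matrix ι ι R := Matrix.of fun i j => v i (l j)
  have hM : M.IsLowerTriangular := fun i j hij => hlower i j hij
  have hdet : M.det ≠ 0 := by
    rw [Matrix.det_of_isLowerTriangular M hM]
    exact Finset.prod_ne_zero_iff.mpr fun i _ => hdiag i
  exact LinearIndependent.of_comp (LinearMap.funLeft R R l)
    (Matrix.linearIndependent_rows_of_det_ne_zero hdet)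

theorem mem_ker_mulVecLin_of_inDual {𝔽 : Type*} [Field 𝔽] {m n : ℕ}
    {G : Matrix (Fin m) (Fin n) 𝔽} {e : Fin n → 𝔽} (he : inDual (rowCode G) e) :
    e ∈ LinearMap.ker G.mulVecLin := by
  ext t
  simpa [Matrix.mulVec, dotProduct, mul_comm] using
    he (G t) (Submodule.subset_span ⟨t, rfl⟩)

theorem finrank_ker_mulVecLin {𝔽 : Type*} [Field 𝔽] {m n : ℕ}
    (G : Matrix (Fin m) (Fin n) 𝔽) :
    Module.finrank 𝔽 (LinearMap.ker G.mulVecLin) = n - Module.finrank 𝔽 (rowCode G) := by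
  have hnullity := G.mulVecLin.finrank_range_add_finrank_ker
  rw [Module.finrank_fin_fun] at hnullity
  rw [rowCode, ← Matrix.row_def, ← Matrix.rank_eq_finrank_span_row, Matrix.rank]
  omega

theorem LinearIndependent.card_le_finrank_of_mem {K V ι : Type*} [DivisionRing K] [AddCommGroup V]
    [Module K V] [FiniteDimensional K V] [Fintype ι] {v : ι → V} (hv : LinearIndependent K v) {W : Submodule K V}
    (hW : ∀ i, v i ∈ W) : Fintype.card ι ≤ Module.finrank K W := by
  rw [← finrank_span_eq_card hv]
  exact Submodule.finrank_mono (Submodule.span_le.mpr (Set.range_subset_iff.mpr hW))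

/-- dual codewords supported on regenerating sets with a nontrivial union are
linearly independent; in particular `x ≤ n − k`. -/
theorem dual_words_linearIndependent {𝔽 : Type*} [Field 𝔽] {m n : ℕ}
    (G : Matrix (Fin m) (Fin n) 𝔽) (k x : ℕ)
    (hk : k = Module.finrank 𝔽 (rowCode G))
    (l : Fin x → Fin n) (R : Fin x → Finset (Fin n)) (hnt : ntUnion G x l R)
    (e : Fin x → (Fin n → 𝔽)) (he : ∀ j, inDual (rowCode G) (e j))
    (hsupp : ∀ j, Function.support (e j) = ↑(R j)) :
    LinearIndependent 𝔽 e ∧ x ≤ n - k := by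
  have hli : LinearIndependent 𝔽 e := linearIndependent_of_isLowerTriangular e l
    (fun j => Function.mem_support.mp (by rw [hsupp j]; exact_mod_cast (hnt.1 j).1))
    (fun i j hij => Function.notMem_support.mp (by rw [hsupp i]; exact_mod_cast hnt.2 j i hij))
  refine ⟨hli, ?_⟩
  have hcard := hli.card_le_finrank_of_mem fun j => mem_ker_mulVecLin_of_inDual (he j)
  rwa [Fintype.card_fin, finrank_ker_mulVecLin, ← hk] at hcard
end

section
/- For an [n,k,d]_q linear code, d ≤ n − k + 1 − ρ, where ρ = max{x : Φ(x) − x < k}. -/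
open scoped Classical

/-!
Take a nontrivial union of `ρ` regenerating sets whose union `S` has `Φ(ρ) < k + ρ` elements.
Every regenerated column lies in the span of the columns of `S` that are not regenerated, so the
columns indexed by `S` span a space of dimension at most `|S| - ρ < k`. Adding columns that raise
the rank one at a time enlarges `S` to a set `T` of rank `k - 1` with `|T| ≥ k - 1 + ρ`. As the
columns of `T` do not span the column space, some nonzero codeword vanishes on `T`, and its weight
is at most `n - |T| ≤ n - k + 1 - ρ`.
-/

open Submodule Module Matrix Finset

section Span

variable {𝔽 ι V : Type*} [Field 𝔽] [AddCommGroup V] [Module 𝔽 V]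

theorem finrank_span_image_add_card_le {v : ι → V} {S L : Finset ι} (hLS : L ⊆ S)
    (hL : ∀ i ∈ L, v i ∈ span 𝔽 (v '' ↑(S \ L))) :
    finrank 𝔽 (span 𝔽 (v '' ↑S)) + L.card ≤ S.card := by
  have hle : span 𝔽 (v '' ↑S) ≤ span 𝔽 (v '' ↑(S \ L)) := by
    refine span_le.mpr ?_
    rintro _ ⟨i, hi, rfl⟩
    by_cases hiL : i ∈ L
    · exact hL i hiL
    · exact subset_span ⟨i, mem_sdiff.mpr ⟨hi, hiL⟩, rfl⟩
  have : FiniteDimensional 𝔽 (span 𝔽 (v '' ↑(S \ L))) :=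
    FiniteDimensional.span_of_finite 𝔽 ((S \ L).finite_toSet.image v)
  have hcard : finrank 𝔽 (span 𝔽 (v '' ↑(S \ L))) ≤ (S \ L).card := by
    rw [← coe_image]
    exact (finrank_span_finset_le_card _).trans card_image_le
  have := finrank_mono hle
  have := card_sdiff_add_card_eq_card hLS
  omega

theorem exists_superset_finrank_span_image_eq [FiniteDimensional 𝔽 V] (v : ι → V)
    (T : Finset ι) {r : ℕ} (hTr : finrank 𝔽 (span 𝔽 (v '' ↑T)) ≤ r)
    (hr : r ≤ finrank 𝔽 (span 𝔽 (Set.range v))) :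
    ∃ T', T ⊆ T' ∧ finrank 𝔽 (span 𝔽 (v '' ↑T')) = r ∧
      T'.card + finrank 𝔽 (span 𝔽 (v '' ↑T)) = T.card + r := by
  induction h : r - finrank 𝔽 (span 𝔽 (v '' ↑T)) generalizing T with
  | zero => exact ⟨T, subset_rfl, by omega, by omega⟩
  | succ j ih =>
    obtain ⟨i, hi⟩ : ∃ i, v i ∉ span 𝔽 (v '' ↑T) := by
      by_contra! hall
      have : span 𝔽 (Set.range v) = span 𝔽 (v '' ↑T) :=
        le_antisymm (span_le.mpr (Set.range_subset_iff.mpr hall))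
          (span_mono (Set.image_subset_range _ _))
      rw [this] at hr
      omega
    have hiT : i ∉ T := fun hiT => hi (subset_span (Set.mem_image_of_mem v hiT))
    have hrank : finrank 𝔽 (span 𝔽 (v '' ↑(insert i T))) =
        finrank 𝔽 (span 𝔽 (v '' ↑T)) + 1 := by
      rw [coe_insert, Set.image_insert_eq, span_insert, sup_comm, finrank_sup_span_singleton hi]
    obtain ⟨T', hT', hrT', hcard⟩ := ih (insert i T) (by omega) (by omega)
    refine ⟨T', (subset_insert i T).trans hT', hrT', ?_⟩
    rw [card_insert_of_notMem hiT] at hcard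
    omega

end Span

theorem Submodule.exists_ne_zero_forall_eq_zero_of_finrank_map_lt {𝔽 ι : Type*} [Field 𝔽]
    (C : Submodule 𝔽 (ι → 𝔽)) [FiniteDimensional 𝔽 C] (T : Set ι)
    (h : finrank 𝔽 (C.map (LinearMap.funLeft 𝔽 𝔽 ((↑) : T → ι))) < finrank 𝔽 C) :
    ∃ c ∈ C, c ≠ 0 ∧ ∀ j ∈ T, c j = 0 := by
  set f := (LinearMap.funLeft 𝔽 𝔽 ((↑) : T → ι)).comp C.subtype
  have hker : LinearMap.ker f ≠ ⊥ := by
    have := f.finrank_range_add_finrank_ker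
    rw [LinearMap.range_comp, range_subtype] at this
    intro h0
    rw [h0, finrank_bot] at this
    omega
  obtain ⟨c, hc, hc0⟩ := exists_mem_ne_zero_of_ne_bot hker
  exact ⟨c, c.2, by simpa using hc0, fun j hj => congrFun hc ⟨j, hj⟩⟩

section Code

variable {𝔽 : Type*} [Field 𝔽] {m n : ℕ}

theorem Matrix.finrank_span_row_eq_finrank_span_col {ι κ : Type*} [Fintype ι] [Fintype κ]
    (A : Matrix ι κ 𝔽) :
    finrank 𝔽 (span 𝔽 (Set.range A.row)) = finrank 𝔽 (span 𝔽 (Set.range A.col)) := by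
  rw [← rank_eq_finrank_span_cols, rank_eq_finrank_span_row]

theorem finrank_rowCode (G : Matrix (Fin m) (Fin n) 𝔽) :
    finrank 𝔽 (rowCode G) = finrank 𝔽 (span 𝔽 (Set.range G.col)) :=
  G.finrank_span_row_eq_finrank_span_col

theorem finrank_map_rowCode_funLeft (G : Matrix (Fin m) (Fin n) 𝔽) (T : Set (Fin n)) :
    finrank 𝔽 ((rowCode G).map (LinearMap.funLeft 𝔽 𝔽 ((↑) : T → Fin n))) =
      finrank 𝔽 (span 𝔽 (G.col '' T)) := by
  have hmap : (rowCode G).map (LinearMap.funLeft 𝔽 𝔽 ((↑) : T → Fin n)) =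
      span 𝔽 (Set.range (G.submatrix id ((↑) : T → Fin n)).row) := by
    rw [rowCode, map_span, ← Set.range_comp]
    rfl
  have hcol : (G.submatrix id ((↑) : T → Fin n)).col = G.col ∘ (↑) := by ext; rfl
  rw [hmap, finrank_span_row_eq_finrank_span_col, hcol, Set.range_comp, Subtype.range_coe]

theorem exists_ne_zero_mem_rowCode_forall_eq_zero (G : Matrix (Fin m) (Fin n) 𝔽) (T : Set (Fin n))
    (h : finrank 𝔽 (span 𝔽 (G.col '' T)) < finrank 𝔽 (rowCode G)) :
    ∃ c ∈ rowCode G, c ≠ 0 ∧ ∀ j ∈ T, c j = 0 :=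
  (rowCode G).exists_ne_zero_forall_eq_zero_of_finrank_map_lt T
    (finrank_map_rowCode_funLeft G T ▸ h)

theorem minDist_le_wt {C : Submodule 𝔽 (Fin n → 𝔽)} {c : Fin n → 𝔽} (hc : c ∈ C) (hc0 : c ≠ 0) :
    minDist C ≤ wt c :=
  Nat.sInf_le ⟨c, hc, hc0, rfl⟩

theorem minDist_add_card_le {C : Submodule 𝔽 (Fin n → 𝔽)} {c : Fin n → 𝔽} (hc : c ∈ C)
    (hc0 : c ≠ 0) {T : Finset (Fin n)} (hT : ∀ j ∈ T, c j = 0) :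
    minDist C + T.card ≤ n := by
  have hsupp : univ.filter (fun j => c j ≠ 0) ⊆ Tᶜ := fun j hj =>
    mem_compl.mpr fun hjT => (mem_filter.mp hj).2 (hT j hjT)
  calc minDist C + T.card ≤ wt c + T.card := by grw [minDist_le_wt hc hc0]
    _ ≤ Tᶜ.card + T.card := by grw [wt, card_le_card hsupp]
    _ = n := by rw [card_compl_add_card, Fintype.card_fin]

end Code

section RegeneratingSets

variable {𝔽 : Type*} [Field 𝔽] {m n x : ℕ} {G : Matrix (Fin m) (Fin n) 𝔽}
  {l : Fin x → Fin n} {R : Fin x → Finset (Fin n)}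

theorem ntUnion.injective (h : ntUnion G x l R) : Function.Injective l := by
  intro a b hab
  by_contra hne
  rcases Ne.lt_or_gt hne with hlt | hlt
  · exact h.2 b a hlt (hab ▸ (h.1 a).1)
  · exact h.2 a b hlt (hab ▸ (h.1 b).1)

theorem ntUnion.le (h : ntUnion G x l R) : x ≤ n := by
  simpa using Fintype.card_le_of_injective l h.injective

theorem ntUnion.col_mem_span (h : ntUnion G x l R) (j : Fin x) :
    G.col (l j) ∈ span 𝔽 (G.col '' ↑(univ.biUnion R \ univ.image l)) := by
  -- strong induction on `j`: nontriviality puts every regenerated coordinate in `R j` before `j`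
  induction j using WellFoundedLT.induction with
  | _ j ih =>
  refine span_le.mpr ?_ (h.1 j).2
  rintro _ ⟨i, hi, rfl⟩
  obtain ⟨hij, hiR⟩ := mem_erase.mp hi
  by_cases hiL : i ∈ univ.image l
  · obtain ⟨j', -, rfl⟩ := mem_image.mp hiL
    have hj' : j' < j := (lt_or_gt_of_ne fun e => hij (congrArg l e)).resolve_right
      fun hgt => h.2 j' j hgt hiR
    exact ih j' hj'
  · exact subset_span ⟨i, mem_sdiff.mpr ⟨mem_biUnion.mpr ⟨j, mem_univ _, hiR⟩, hiL⟩, rfl⟩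

theorem ntUnion.finrank_span_add_le_card (h : ntUnion G x l R) :
    finrank 𝔽 (span 𝔽 (G.col '' ↑(univ.biUnion R))) + x ≤ (univ.biUnion R).card := by
  have hL : univ.image l ⊆ univ.biUnion R := image_subset_iff.mpr fun j _ =>
    mem_biUnion.mpr ⟨j, mem_univ _, (h.1 j).1⟩
  have := finrank_span_image_add_card_le hL (by simpa using h.col_mem_span)
  rwa [card_image_of_injective _ h.injective, card_univ, Fintype.card_fin] at this

theorem ntUnion_zero : ntUnion G 0 Fin.elim0 Fin.elim0 :=
  ⟨fun j => j.elim0, fun j => j.elim0⟩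

theorem exists_ntUnion_card_eq_Phi (h : ntUnion G x l R) :
    ∃ l R, ntUnion G x l R ∧ (univ.biUnion R).card = Phi G x := by
  have : Phi G x ∈ {c | ∃ l R, ntUnion G x l R ∧ (univ.biUnion R).card = c} :=
    Nat.sInf_mem ⟨_, l, R, h, rfl⟩
  exact this

theorem exists_ntUnion_card_lt_add_rho {k : ℕ} (hk : 1 ≤ k) :
    ∃ l R, ntUnion G (rho G k) l R ∧ (univ.biUnion R).card < k + rho G k := by
  obtain ⟨-, R₀, -, hcard₀⟩ := exists_ntUnion_card_eq_Phi (ntUnion_zero (G := G))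
  have hPhi_zero : Phi G 0 = 0 := by simpa using hcard₀.symm
  have hrho : rho G k ∈ {x | (∃ l R, ntUnion G x l R) ∧ Phi G x - x < k} :=
    Nat.sSup_mem ⟨0, ⟨_, _, ntUnion_zero⟩, by omega⟩ ⟨n, fun _ ⟨⟨_, _, h⟩, _⟩ => h.le⟩
  obtain ⟨⟨l, R, h⟩, hlt⟩ := hrho
  obtain ⟨l', R', h', hcard⟩ := exists_ntUnion_card_eq_Phi h
  exact ⟨l', R', h', by omega⟩

end RegeneratingSets

/-- for an `[n,k,d]` linear code, `d ≤ n − k + 1 − ρ` where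
`ρ = max{x : Φ(x) − x < k}`. -/
theorem singleton_like_bound {𝔽 : Type*} [Field 𝔽] {m n : ℕ}
    (G : Matrix (Fin m) (Fin n) 𝔽) (k d : ℕ)
    (hk : k = Module.finrank 𝔽 (rowCode G)) (hk1 : 1 ≤ k)
    (hd : d = minDist (rowCode G)) :
    (d : ℤ) ≤ (n : ℤ) - k + 1 - rho G k := by
  obtain ⟨l, R, hR, hcard⟩ := exists_ntUnion_card_lt_add_rho (G := G) hk1
  have hS := hR.finrank_span_add_le_card
  obtain ⟨T, -, hT, hTcard⟩ := exists_superset_finrank_span_image_eq (𝔽 := 𝔽) G.col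
    (univ.biUnion R) (r := k - 1) (by omega) (by rw [← finrank_rowCode]; omega)
  obtain ⟨c, hc, hc0, hcT⟩ := exists_ne_zero_mem_rowCode_forall_eq_zero G T (by omega)
  have := minDist_add_card_le hc hc0 hcT
  omega
end

section
/- Let C be an [n,k,d] linear code with two (r_i, δ_i)-localities (i = 1,2), with r_1 ≤ r_2, δ_1 ≥ δ_2 ≥ 2. Set Δ = ⌈n_1/(r_1+δ_1−1)⌉(δ_1−1). If r_1⌈n_1/(r_1+δ_1−1)⌉ ≤ k−1 and r_1⌈(Δ−1)/(δ_1−1)⌉ + (Δ−1) < n_1, then for all integers x with 0 ≤ x ≤ Δ: Φ(x) ≤ r_1⌈x/(δ_1−1)⌉ + x. -/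
open scoped Classical

/-
Regenerating sets are chosen greedily inside `T₁`, in chunks of `δ₁ - 1` coordinates. A chunk
picks an uncovered coordinate `ι`, its local group `S`, and a set `E ⊆ S` of size `δ₁ - 1`
containing the new coordinates; each of them is regenerated by `(S \ E) ∪ {j}`, so the chunk
costs at most `|S \ E| ≤ r₁` coordinates beyond the new ones. If `S` has fewer uncovered
coordinates than the chunk still needs, `E` swallows all of them, `S \ E` is already covered,
and the chunk continues in another local group at no extra cost. The hypothesis on `Δ`
guarantees that `T₁` never runs out of uncovered coordinates.
-/

section NtUnion

variable {𝔽 : Type*} [Field 𝔽] {m n : ℕ} {G : Matrix (Fin m) (Fin n) 𝔽}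

def IsNtUnionSet (G : Matrix (Fin m) (Fin n) 𝔽) (x : ℕ) (U : Finset (Fin n)) : Prop :=
  ∃ (l : Fin x → Fin n) (R : Fin x → Finset (Fin n)),
    ntUnion G x l R ∧ Finset.univ.biUnion R = U

theorem Phi_le_card {x : ℕ} {U : Finset (Fin n)} (h : IsNtUnionSet G x U) :
    Phi G x ≤ U.card := by
  obtain ⟨l, R, hR, rfl⟩ := h
  exact Nat.sInf_le ⟨l, R, hR, rfl⟩

theorem isNtUnionSet_zero : IsNtUnionSet G 0 ∅ :=
  ⟨Fin.elim0, Fin.elim0, ⟨fun j => j.elim0, fun j => j.elim0⟩, by simp⟩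

theorem IsNtUnionSet.snoc {x : ℕ} {U Q : Finset (Fin n)} {i : Fin n}
    (h : IsNtUnionSet G x U) (hi : i ∉ U) (hQ : regenSet G i Q) :
    IsNtUnionSet G (x + 1) (U ∪ Q) := by
  obtain ⟨l, R, ⟨hreg, hfresh⟩, rfl⟩ := h
  refine ⟨Fin.snoc l i, Fin.snoc R Q, ⟨fun j => ?_, fun j j' hj => ?_⟩, ?_⟩
  · cases j using Fin.lastCases <;> simp [hQ, hreg]
  · obtain ⟨j', rfl⟩ := Fin.exists_castSucc_eq.mpr (hj.trans_le (Fin.le_last j)).ne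
    cases j using Fin.lastCases with
    | last =>
      simp only [Fin.snoc_last, Fin.snoc_castSucc]
      exact fun hij => hi (Finset.mem_biUnion.mpr ⟨j', Finset.mem_univ _, hij⟩)
    | cast j =>
      simp only [Fin.snoc_castSucc]
      exact hfresh j j' (Fin.castSucc_lt_castSucc_iff.mp hj)
  · ext a
    simp [Fin.exists_fin_succ']

theorem IsNtUnionSet.exists_extend {x : ℕ} {U P F : Finset (Fin n)}
    (h : IsNtUnionSet G x U) (hF : Disjoint F (U ∪ P)) (hreg : ∀ j ∈ F, regenSet G j (P ∪ {j})) :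
    ∃ V ⊆ U ∪ P ∪ F, IsNtUnionSet G (x + F.card) V := by
  induction F using Finset.induction_on with
  | empty => exact ⟨U, by simp, h⟩
  | insert a F haF ih =>
    obtain ⟨V, hVsub, hV⟩ := ih (hF.mono_left (Finset.subset_insert a F))
      (fun j hj => hreg j (Finset.mem_insert_of_mem hj))
    have haV : a ∉ V := by grind
    refine ⟨V ∪ (P ∪ {a}), by grind, ?_⟩
    rw [Finset.card_insert_of_notMem haF, ← add_assoc]
    exact hV.snoc haV (hreg a (Finset.mem_insert_self a F))

theorem IsNtUnionSet.exists_extend_localGroup {x r δ : ℕ} {U S F : Finset (Fin n)}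
    (h : IsNtUnionSet G x U) (hδS : δ ≤ S.card) (hSr : S.card ≤ r + δ - 1)
    (hreg : ∀ E ⊆ S, E.card = δ - 1 → ∀ j ∈ E, regenSet G j ((S \ E) ∪ {j}))
    (hF : F ⊆ S \ U) (hFδ : F.card ≤ δ - 1) :
    ∃ V ⊆ U ∪ S, IsNtUnionSet G (x + F.card) V ∧ V.card ≤ U.card + r + F.card := by
  obtain ⟨E, hFE, hES, hE⟩ :=
    Finset.exists_subsuperset_card_eq (hF.trans Finset.sdiff_subset) hFδ (by omega)
  have hFU : Disjoint F (U ∪ (S \ E)) :=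
    Finset.disjoint_union_right.mpr ⟨Finset.disjoint_of_subset_left hF Finset.sdiff_disjoint,
      Finset.disjoint_of_subset_left hFE Finset.disjoint_sdiff⟩
  obtain ⟨V, hVsub, hV⟩ := h.exists_extend hFU fun j hj => hreg E hES hE j (hFE hj)
  have hSE : (S \ E).card ≤ r := by rw [Finset.card_sdiff_of_subset hES]; omega
  refine ⟨V, hVsub.trans ?_, hV, ?_⟩
  · exact Finset.union_subset (Finset.union_subset_union_right Finset.sdiff_subset)
      ((hF.trans Finset.sdiff_subset).trans Finset.subset_union_right)
  · calc V.card ≤ (U ∪ (S \ E) ∪ F).card := Finset.card_le_card hVsub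
      _ ≤ U.card + (S \ E).card + F.card :=
        (Finset.card_union_le _ _).trans (by gcongr; exact Finset.card_union_le _ _)
      _ ≤ U.card + r + F.card := by gcongr

theorem IsNtUnionSet.exists_extend_of_hasLocality {T : Finset (Fin n)} {r δ : ℕ}
    (hloc : hasLocality G T r δ) {e : ℕ} (he : e ≤ δ - 1) {x : ℕ} {U : Finset (Fin n)}
    (h : IsNtUnionSet G x U) (hT : U.card + e ≤ T.card) :
    ∃ V, IsNtUnionSet G (x + e) V ∧ V.card ≤ U.card + r + e := by
  induction e using Nat.strong_induction_on generalizing x U with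
  | _ e ih =>
  rcases Nat.eq_zero_or_pos e with rfl | he0
  · exact ⟨U, h, by omega⟩
  obtain ⟨ι, hιT, hιU⟩ : ∃ ι ∈ T, ι ∉ U :=
    Finset.not_subset.mp fun hTU => by have := Finset.card_le_card hTU; omega
  obtain ⟨S, -, hιS, hδS, hSr, hreg⟩ := hloc ι hιT
  have hN : 0 < (S \ U).card := Finset.card_pos.mpr ⟨ι, Finset.mem_sdiff.mpr ⟨hιS, hιU⟩⟩
  by_cases heN : e ≤ (S \ U).card
  · obtain ⟨F, hF, rfl⟩ := Finset.exists_subset_card_eq heN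
    obtain ⟨V, -, hV, hVcard⟩ := h.exists_extend_localGroup hδS hSr hreg hF he
    exact ⟨V, hV, hVcard⟩
  obtain ⟨V, hVsub, hV, -⟩ :=
    h.exists_extend_localGroup hδS hSr hreg subset_rfl (by omega : (S \ U).card ≤ δ - 1)
  have hVcard : V.card ≤ U.card + (S \ U).card := by
    calc V.card ≤ (U ∪ S \ U).card := by
          rw [Finset.union_sdiff_self_eq_union]; exact Finset.card_le_card hVsub
      _ ≤ U.card + (S \ U).card := Finset.card_union_le _ _
  obtain ⟨W, hW, hWcard⟩ := ih (e - (S \ U).card) (by omega) (by omega) hV (by omega)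
  refine ⟨W, ?_, by omega⟩
  rwa [add_assoc, Nat.add_sub_cancel' (by omega)] at hW

end NtUnion

namespace hasLocality

variable {𝔽 : Type*} [Field 𝔽] {m n : ℕ} {G : Matrix (Fin m) (Fin n) 𝔽}
  {T : Finset (Fin n)} {r δ : ℕ}

theorem exists_isNtUnionSet_chunks (hloc : hasLocality G T r δ) (q : ℕ) {e : ℕ}
    (he : e ≤ δ - 1) (hT : r * q + ((δ - 1) * q + e) ≤ T.card) :
    ∃ V, IsNtUnionSet G ((δ - 1) * q + e) V ∧ V.card ≤ r * (q + 1) + ((δ - 1) * q + e) := by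
  induction q generalizing e with
  | zero =>
    obtain ⟨V, hV, hVcard⟩ := isNtUnionSet_zero.exists_extend_of_hasLocality hloc he
      (by simpa using hT)
    exact ⟨V, by simpa using hV, by simpa using hVcard⟩
  | succ q ih =>
    obtain ⟨U, hU, hUcard⟩ := ih le_rfl (by linarith)
    obtain ⟨V, hV, hVcard⟩ := hU.exists_extend_of_hasLocality hloc he (by linarith)
    exact ⟨V, by rwa [mul_add_one], by linarith⟩

theorem Phi_le (hloc : hasLocality G T r δ) (hδ : 0 < δ - 1) {x : ℕ}
    (hx : r * ((x - 1) / (δ - 1)) + x ≤ T.card) :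
    Phi G x ≤ r * cdiv x (δ - 1) + x := by
  rcases Nat.eq_zero_or_pos x with rfl | hx0
  · exact (Phi_le_card isNtUnionSet_zero).trans (Nat.zero_le _)
  have hxq : (δ - 1) * ((x - 1) / (δ - 1)) + ((x - 1) % (δ - 1) + 1) = x := by
    have := Nat.div_add_mod (x - 1) (δ - 1); omega
  have hcdiv : cdiv x (δ - 1) = (x - 1) / (δ - 1) + 1 := by
    rw [cdiv, show x + (δ - 1) - 1 = x - 1 + (δ - 1) by omega, Nat.add_div_right _ hδ]
  obtain ⟨V, hV, hVcard⟩ := hloc.exists_isNtUnionSet_chunks ((x - 1) / (δ - 1))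
    (e := (x - 1) % (δ - 1) + 1) (Nat.mod_lt _ hδ) (by rwa [hxq])
  rw [hxq] at hV hVcard
  rw [hcdiv]
  exact (Phi_le_card hV).trans hVcard

end hasLocality

theorem phi_bound_two_localities_first_general {𝔽 : Type*} [Field 𝔽] {m n : ℕ}
    (G : Matrix (Fin m) (Fin n) 𝔽)
    (T₁ : Finset (Fin n)) (n₁ r₁ δ₁ δ₂ : ℕ)
    (hn₁ : T₁.card = n₁)
    (hδ : δ₂ ≤ δ₁) (hδ₂ : 2 ≤ δ₂)
    (hloc₁ : hasLocality G T₁ r₁ δ₁)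
    (Δ : ℕ)
    (h2 : r₁ * cdiv (Δ - 1) (δ₁ - 1) + (Δ - 1) < n₁) :
    ∀ x ≤ Δ, Phi G x ≤ r₁ * cdiv x (δ₁ - 1) + x := by
  intro x hx
  have hq : (x - 1) / (δ₁ - 1) ≤ cdiv (Δ - 1) (δ₁ - 1) :=
    (Nat.div_le_div_right (show x - 1 ≤ Δ - 1 by omega)).trans
      (Nat.div_le_div_right (show Δ - 1 ≤ Δ - 1 + (δ₁ - 1) - 1 by omega))
  refine hloc₁.Phi_le (by omega) ?_
  have := Nat.mul_le_mul_left r₁ hq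
  omega

/-- Lemma 3.1, first part: bound on `Φ(x)` for `0 ≤ x ≤ Δ`. -/
theorem phi_bound_two_localities_first {𝔽 : Type*} [Field 𝔽] {m n : ℕ}
    (G : Matrix (Fin m) (Fin n) 𝔽) (k : ℕ)
    (hk : k = Module.finrank 𝔽 (rowCode G))
    (T₁ T₂ : Finset (Fin n)) (n₁ n₂ r₁ r₂ δ₁ δ₂ : ℕ)
    (hdisj : Disjoint T₁ T₂) (hcover : T₁ ∪ T₂ = Finset.univ)
    (hn₁ : T₁.card = n₁) (hn₂ : T₂.card = n₂)
    (hr : r₁ ≤ r₂) (hδ : δ₂ ≤ δ₁) (hδ₂ : 2 ≤ δ₂)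
    (hloc₁ : hasLocality G T₁ r₁ δ₁) (hloc₂ : hasLocality G T₂ r₂ δ₂)
    (Δ : ℕ) (hΔ : Δ = cdiv n₁ (r₁ + δ₁ - 1) * (δ₁ - 1))
    (h1 : r₁ * cdiv n₁ (r₁ + δ₁ - 1) ≤ k - 1)
    (h2 : r₁ * cdiv (Δ - 1) (δ₁ - 1) + (Δ - 1) < n₁) :
    ∀ x ≤ Δ, Phi G x ≤ r₁ * cdiv x (δ₁ - 1) + x :=
  phi_bound_two_localities_first_general G T₁ n₁ r₁ δ₁ δ₂ hn₁ hδ hδ₂ hloc₁ Δ h2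
end

section
/- For an [n,k,d] linear code with two (r_i,δ_i)_{i∈{1,2}} localities, if r_1⌈n_1/(r_1+δ_1−1)⌉ ≤ k−1 and r_1⌈(Δ−1)/(δ_1−1)⌉+(Δ−1) < n_1 with Δ = ⌈n_1/(r_1+δ_1−1)⌉(δ_1−1), then d ≤ n − k + 1 − ⌈n_1/(r_1+δ_1−1)⌉(δ_1−1) − (⌈(k − r_1⌈n_1/(r_1+δ_1−1)⌉)/r_2⌉ − 1)(δ_2−1). -/
/-!
Write `rk U` for the rank of the columns of `G` indexed by `U`. If `rk W < k`, pad `W` one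
coordinate at a time to rank `k - 1` (this does not lower the nullity `|W| - rk W`) and take a
nonzero codeword vanishing there: `d ≤ n - k + 1 - (|W| - rk W)`. So it suffices to find `W` of rank
`< k` and large nullity.

Adding to `U` a local group `S ⊄ U` either keeps the rank, or, since any `δ - 1` new coordinates
of `S` are regenerated by the rest of `S`, raises it by at most `r` and the nullity by at least
`δ - 1`. Adding groups of `T₁` for `a = ⌈n₁/(r₁+δ₁-1)⌉` rank-raising steps reaches nullity `Δ` at
rank `≤ a r₁` (the condition on `n₁` prevents `T₁` from running out first); then groups of either
kind, whose steps all obey the weaker `(r₂, δ₂)` bounds, give `⌈(k - a r₁)/r₂⌉ - 1` further steps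
while keeping the rank below `k`.
-/

open scoped Classical

theorem cdiv_eq_ceilDiv (a b : ℕ) : cdiv a b = a ⌈/⌉ b := rfl

theorem cdiv_pos {a b : ℕ} (ha : 0 < a) (hb : 0 < b) : 0 < cdiv a b := by
  rw [cdiv_eq_ceilDiv, Nat.pos_iff_ne_zero]
  intro h
  have := (ceilDiv_le_iff_le_mul hb).1 h.le
  omega

theorem le_cdiv_of_mul_le {a b c : ℕ} (hb : 0 < b) (h : c * b ≤ a) : c ≤ cdiv a b :=
  ((Nat.le_div_iff_mul_le hb).2 h).trans (Nat.div_le_div_right (by omega))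

theorem cdiv_sub_one_mul_lt {a b : ℕ} (ha : 0 < a) (hb : 0 < b) : (cdiv a b - 1) * b < a := by
  by_contra! h
  have : cdiv a b ≤ cdiv a b - 1 := (ceilDiv_le_iff_le_mul hb).2 (h.trans_eq (mul_comm _ _))
  have := cdiv_pos ha hb
  omega

section ColumnRank

variable {𝔽 : Type*} [Field 𝔽] {m n : ℕ} (G : Matrix (Fin m) (Fin n) 𝔽)

noncomputable def colRank (U : Finset (Fin n)) : ℕ :=
  Set.finrank 𝔽 (G.col '' ↑U)

variable {G}

theorem colRank_empty : colRank G ∅ = 0 := by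
  simp [colRank, Set.finrank]

theorem colRank_univ : colRank G Finset.univ = G.rank := by
  rw [colRank, Finset.coe_univ, Set.image_univ, Matrix.rank_eq_finrank_span_cols, Set.finrank]

theorem colRank_union_le (U V : Finset (Fin n)) :
    colRank G (U ∪ V) ≤ colRank G U + (V \ U).card := by
  rw [← Finset.union_sdiff_self_eq_union, colRank, Finset.coe_union, Set.image_union,
    Set.finrank, Submodule.span_union]
  refine (Submodule.finrank_add_le_finrank_add_finrank _ _).trans (Nat.add_le_add_left ?_ _)
  rw [← Finset.coe_image]
  exact (finrank_span_finset_le_card _).trans Finset.card_image_le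

theorem colRank_insert_le (U : Finset (Fin n)) (j : Fin n) :
    colRank G (insert j U) ≤ colRank G U + 1 := by
  rw [Finset.insert_eq, Finset.union_comm]
  exact (colRank_union_le U {j}).trans
    (Nat.add_le_add_left (Finset.card_le_card Finset.sdiff_subset) _)

theorem colRank_union_le_union_sdiff {U S E : Finset (Fin n)}
    (hE : ∀ j ∈ E, G.col j ∈ Submodule.span 𝔽 (G.col '' ↑(S \ E))) :
    colRank G (U ∪ S) ≤ colRank G (U ∪ (S \ E)) := by
  apply Submodule.finrank_mono
  rw [Submodule.span_le]
  rintro _ ⟨j, hj, rfl⟩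
  by_cases hjE : j ∈ E
  · exact Submodule.span_mono (Set.image_mono (by simp)) (hE j hjE)
  · refine Submodule.subset_span ⟨j, ?_, rfl⟩
    simp only [Finset.coe_union, Finset.coe_sdiff, Set.mem_union, Set.mem_sdiff] at hj ⊢
    tauto

theorem regenSet.mem_span_sdiff {S E : Finset (Fin n)} {j : Fin n}
    (h : regenSet G j ((S \ E) ∪ {j})) (hj : j ∈ E) :
    G.col j ∈ Submodule.span 𝔽 (G.col '' ↑(S \ E)) := by
  have hnot : j ∉ S \ E := fun h => (Finset.mem_sdiff.1 h).2 hj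
  have h₂ := h.2
  rwa [Finset.union_comm, ← Finset.insert_eq, Finset.erase_insert hnot] at h₂

end ColumnRank

section Singleton

variable {𝔽 : Type*} [Field 𝔽] {m n : ℕ} {G : Matrix (Fin m) (Fin n) 𝔽}

theorem finrank_rowCode_s8 : Module.finrank 𝔽 (rowCode G) = G.rank :=
  (Matrix.rank_eq_finrank_span_row G).symm

theorem finrank_ker_vecMulLinear_add_rank {ι : Type*} [Fintype ι]
    (A : Matrix (Fin m) ι 𝔽) : Module.finrank 𝔽 (LinearMap.ker A.vecMulLinear) + A.rank = m := by
  rw [Matrix.rank_eq_finrank_span_row, ← range_vecMulLinear, add_comm,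
    LinearMap.finrank_range_add_finrank_ker, Module.finrank_fin_fun]

theorem exists_mem_rowCode_ne_zero_eq_zero_on {U : Finset (Fin n)} (h : colRank G U < G.rank) :
    ∃ c ∈ rowCode G, c ≠ 0 ∧ ∀ j ∈ U, c j = 0 := by
  set A : Matrix (Fin m) U 𝔽 := G.submatrix id (↑)
  have hA : A.rank = colRank G U := by
    rw [Matrix.rank_eq_finrank_span_cols, colRank, Set.finrank, Set.image_eq_range]
    rfl
  have hker : ¬ LinearMap.ker A.vecMulLinear ≤ LinearMap.ker G.vecMulLinear := fun hle => by
    have := Submodule.finrank_mono hle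
    have := finrank_ker_vecMulLinear_add_rank A
    have := finrank_ker_vecMulLinear_add_rank G
    omega
  obtain ⟨x, hxA, hxG⟩ := SetLike.not_le_iff_exists.1 hker
  refine ⟨Matrix.vecMul x G, ?_, hxG, fun j hj => ?_⟩
  · rw [rowCode, ← Matrix.row_def, ← range_vecMulLinear]
    exact ⟨x, rfl⟩
  · exact congrFun (LinearMap.mem_ker.1 hxA) ⟨j, hj⟩

theorem exists_colRank_eq_of_le {t : ℕ} (ht : t ≤ G.rank) :
    ∀ U : Finset (Fin n), colRank G U ≤ t →
      ∃ W, colRank G W = t ∧ U.card + t ≤ W.card + colRank G U := by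
  intro U
  induction h : Uᶜ.card using Nat.strong_induction_on generalizing U with
  | _ N ih =>
  intro hU
  rcases hU.eq_or_lt with hUt | hUt
  · exact ⟨U, hUt, by omega⟩
  obtain ⟨j, hj⟩ : ∃ j, j ∉ U := by
    by_contra! hall
    rw [Finset.eq_univ_of_forall hall, colRank_univ] at hUt
    omega
  have hlt : (insert j U)ᶜ.card < N :=
    h ▸ Finset.card_lt_card (Finset.compl_ssubset_compl.2 (Finset.ssubset_insert hj))
  obtain ⟨W, hWt, hW⟩ := ih _ hlt _ rfl ((colRank_insert_le U j).trans hUt)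
  have := colRank_insert_le (G := G) U j
  rw [Finset.card_insert_of_notMem hj] at hW
  exact ⟨W, hWt, by omega⟩

theorem minDist_le_of_forall_eq_zero {c : Fin n → 𝔽} (hc : c ∈ rowCode G) (h0 : c ≠ 0)
    {W : Finset (Fin n)} (hW : ∀ j ∈ W, c j = 0) : minDist (rowCode G) + W.card ≤ n := by
  have hwt : wt c ≤ Wᶜ.card := Finset.card_le_card fun j hj =>
    Finset.mem_compl.2 fun hjW => (Finset.mem_filter.1 hj).2 (hW j hjW)
  have hd : minDist (rowCode G) ≤ wt c := Nat.sInf_le ⟨c, hc, h0, rfl⟩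
  rw [Finset.card_compl, Fintype.card_fin] at hwt
  have := Finset.card_le_univ W
  rw [Fintype.card_fin] at this
  omega

theorem minDist_add_rank_add_card_le {W : Finset (Fin n)} (hW : colRank G W < G.rank) :
    minDist (rowCode G) + G.rank + W.card ≤ n + 1 + colRank G W := by
  obtain ⟨W', hW'rk, hW'⟩ := exists_colRank_eq_of_le (Nat.sub_le G.rank 1) W (by omega)
  obtain ⟨c, hc, hc0, hcW'⟩ := exists_mem_rowCode_ne_zero_eq_zero_on (G := G) (U := W') (by omega)
  have := minDist_le_of_forall_eq_zero hc hc0 hcW'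
  omega

end Singleton

section Locality

variable {𝔽 : Type*} [Field 𝔽] {m n : ℕ} (G : Matrix (Fin m) (Fin n) 𝔽)

def IsLocalStep (r δ : ℕ) (U V : Finset (Fin n)) : Prop :=
  U ⊂ V ∧ (colRank G V ≤ colRank G U ∨
    colRank G V ≤ colRank G U + r ∧ colRank G V + (δ - 1) + U.card ≤ colRank G U + V.card)

def LocallyExtendable (T : Finset (Fin n)) (r δ : ℕ) : Prop :=
  ∀ U, ∀ ι ∈ T, ι ∉ U → ∃ V, ι ∈ V ∧ IsLocalStep G r δ U V

variable {G}

theorem IsLocalStep.mono {r r' δ δ' : ℕ} {U V : Finset (Fin n)} (h : IsLocalStep G r δ U V)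
    (hr : r ≤ r') (hδ : δ' ≤ δ) : IsLocalStep G r' δ' U V := by
  obtain ⟨hUV, h | ⟨h₁, h₂⟩⟩ := h
  · exact ⟨hUV, .inl h⟩
  · exact ⟨hUV, .inr ⟨by omega, by omega⟩⟩

theorem isLocalStep_union {r δ : ℕ} {U S : Finset (Fin n)} (hSδ : δ ≤ S.card)
    (hSr : S.card ≤ r + δ - 1)
    (hreg : ∀ E ⊆ S, E.card = δ - 1 → ∀ j ∈ E, regenSet G j ((S \ E) ∪ {j}))
    (hSU : ¬ S ⊆ U) : IsLocalStep G r δ U (U ∪ S) := by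
  have hcard : (S \ U).card + U.card = (U ∪ S).card := by
    rw [Finset.card_sdiff_add_card, Finset.union_comm]
  have hdrop : ∀ E ⊆ S, E.card = δ - 1 → colRank G (U ∪ S) ≤ colRank G (U ∪ (S \ E)) :=
    fun E hES hE => colRank_union_le_union_sdiff fun j hj =>
      (hreg E hES hE j hj).mem_span_sdiff hj
  refine ⟨left_lt_sup.2 hSU, ?_⟩
  rcases lt_or_ge (S \ U).card (δ - 1) with hsmall | hlarge
  · -- `δ - 1` coordinates of `S` covering `S \ U` are regenerated inside `U`
    obtain ⟨E, hUE, hES, hE⟩ :=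
      Finset.exists_subsuperset_card_eq Finset.sdiff_subset hsmall.le (by omega)
    have hSE : U ∪ (S \ E) = U := Finset.union_eq_left.2 (sdiff_le_comm.1 hUE)
    have hrk := hdrop E hES hE
    rw [hSE] at hrk
    exact .inl hrk
  · -- `δ - 1` new coordinates of `S` are regenerated by the others
    obtain ⟨E, hEU, hE⟩ := Finset.exists_subset_card_eq hlarge
    have hES : E ⊆ S := hEU.trans Finset.sdiff_subset
    have hnew : ((S \ E) \ U).card = (S \ U).card - (δ - 1) := by
      rw [sdiff_right_comm, Finset.card_sdiff_of_subset hEU, hE]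
    have hrk := (hdrop E hES hE).trans (colRank_union_le U (S \ E))
    have := Finset.card_le_card (Finset.sdiff_subset : S \ U ⊆ S)
    exact .inr ⟨by omega, by omega⟩

theorem hasLocality.locallyExtendable {T : Finset (Fin n)} {r δ : ℕ}
    (hloc : hasLocality G T r δ) : LocallyExtendable G T r δ := by
  intro U ι hι hιU
  obtain ⟨S, -, hιS, hSδ, hSr, hreg⟩ := hloc ι hι
  exact ⟨U ∪ S, Finset.mem_union_right U hιS,
    isLocalStep_union hSδ hSr hreg fun hSU => hιU (hSU hιS)⟩

theorem hasLocality.pos {T : Finset (Fin n)} {r δ : ℕ} (hloc : hasLocality G T r δ)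
    (hT : T.Nonempty) (hδ : 0 < δ) : 0 < r := by
  obtain ⟨ι, hι⟩ := hT
  obtain ⟨S, -, -, hSδ, hSr, -⟩ := hloc ι hι
  omega

namespace LocallyExtendable

variable {T T' : Finset (Fin n)} {r r' δ δ' : ℕ}

theorem mono (h : LocallyExtendable G T r δ) (hr : r ≤ r') (hδ : δ' ≤ δ) :
    LocallyExtendable G T r' δ' := fun U ι hι hιU =>
  let ⟨V, hιV, hV⟩ := h U ι hι hιU
  ⟨V, hιV, hV.mono hr hδ⟩

theorem union (h : LocallyExtendable G T r δ) (h' : LocallyExtendable G T' r δ) :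
    LocallyExtendable G (T ∪ T') r δ := fun U ι hι hιU =>
  (Finset.mem_union.1 hι).elim (h U ι · hιU) (h' U ι · hιU)

theorem exists_extension (h : LocallyExtendable G T r δ) (U₀ : Finset (Fin n)) (N : ℕ) :
    ∃ U c, c ≤ N ∧ (c = N ∨ T ⊆ U) ∧ colRank G U ≤ colRank G U₀ + c * r ∧
      colRank G U + c * (δ - 1) + U₀.card ≤ colRank G U₀ + U.card := by
  induction hM : (T \ U₀).card using Nat.strong_induction_on generalizing U₀ N with
  | _ M ih =>
  by_cases hstop : N = 0 ∨ T ⊆ U₀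
  · exact ⟨U₀, 0, Nat.zero_le N, hstop.imp Eq.symm id, by simp, by simp⟩
  push Not at hstop
  obtain ⟨ι, hιT, hιU₀⟩ := Finset.not_subset.1 hstop.2
  obtain ⟨V, hιV, hU₀V, hV⟩ := h U₀ ι hιT hιU₀
  have hlt : (T \ V).card < M := hM ▸ Finset.card_lt_card
    ((Finset.ssubset_iff_of_subset (Finset.sdiff_subset_sdiff le_rfl hU₀V.subset)).2
      ⟨ι, Finset.mem_sdiff.2 ⟨hιT, hιU₀⟩, fun h => (Finset.mem_sdiff.1 h).2 hιV⟩)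
  have hcard := Finset.card_lt_card hU₀V
  rcases hV with hfree | ⟨hrk, hnull⟩
  · obtain ⟨U, c, hcN, hc, hU₁, hU₂⟩ := ih _ hlt V N rfl
    exact ⟨U, c, hcN, hc, by omega, by omega⟩
  · obtain ⟨N, rfl⟩ := Nat.exists_eq_add_one_of_ne_zero hstop.1
    obtain ⟨U, c, hcN, hc, hU₁, hU₂⟩ := ih _ hlt V N rfl
    refine ⟨U, c + 1, by omega, hc.imp (congrArg (· + 1)) id, ?_, ?_⟩ <;>
      rw [add_one_mul] <;> omega

theorem exists_colRank_le_of_lt_card (h : LocallyExtendable G T r δ) (hδ : 2 ≤ δ) (N : ℕ)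
    (hT : r * cdiv (N * (δ - 1) - 1) (δ - 1) + (N * (δ - 1) - 1) < T.card) :
    ∃ W, colRank G W ≤ N * r ∧ colRank G W + N * (δ - 1) ≤ W.card := by
  obtain ⟨U, c, hcN, hc, hrk, hnull⟩ := h.exists_extension ∅ N
  simp only [colRank_empty, zero_add, Finset.card_empty, add_zero] at hrk hnull
  refine ⟨U, hrk.trans (Nat.mul_le_mul_right r hcN), ?_⟩
  rcases hc with rfl | hTU
  · exact hnull
  -- `T` was exhausted after `c` rank-raising steps: either they already give nullity `N (δ - 1)`,
  -- or `c` is small enough for the lower bound on `|T|` to apply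
  have hTcard := Finset.card_le_card hTU
  by_cases hfew : N * (δ - 1) ≤ c * (δ - 1)
  · omega
  have hc : c ≤ cdiv (N * (δ - 1) - 1) (δ - 1) := le_cdiv_of_mul_le (by omega) (by omega)
  have := Nat.mul_le_mul_left r hc
  rw [mul_comm] at hrk
  omega

end LocallyExtendable

end Locality

theorem singleton_bound_two_localities_general {𝔽 : Type*} [Field 𝔽] {m n : ℕ}
    (G : Matrix (Fin m) (Fin n) 𝔽) (k d : ℕ)
    (hk : k = Module.finrank 𝔽 (rowCode G)) (hd : d = minDist (rowCode G))
    (T₁ T₂ : Finset (Fin n)) (n₁ r₁ r₂ δ₁ δ₂ : ℕ)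
    (hcover : T₁ ∪ T₂ = Finset.univ)
    (hn₁ : T₁.card = n₁)
    (hr : r₁ ≤ r₂) (hδ : δ₂ ≤ δ₁) (hδ₂ : 2 ≤ δ₂)
    (hloc₁ : hasLocality G T₁ r₁ δ₁) (hloc₂ : hasLocality G T₂ r₂ δ₂)
    (Δ : ℕ) (hΔ : Δ = cdiv n₁ (r₁ + δ₁ - 1) * (δ₁ - 1))
    (h1 : r₁ * cdiv n₁ (r₁ + δ₁ - 1) ≤ k - 1)
    (h2 : r₁ * cdiv (Δ - 1) (δ₁ - 1) + (Δ - 1) < n₁) :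
    (d : ℤ) ≤ (n : ℤ) - k + 1 - (cdiv n₁ (r₁ + δ₁ - 1) : ℤ) * ((δ₁ : ℤ) - 1)
      - ((cdiv (k - r₁ * cdiv n₁ (r₁ + δ₁ - 1)) r₂ : ℤ) - 1) * ((δ₂ : ℤ) - 1) := by
  rw [finrank_rowCode_s8] at hk
  subst hk hd hΔ hn₁
  set a := cdiv T₁.card (r₁ + δ₁ - 1)
  set b := cdiv (G.rank - r₁ * a) r₂
  have hT₁ : T₁.Nonempty := Finset.card_pos.1 (by omega)
  have hr₁ : 0 < r₁ := hloc₁.pos hT₁ (by omega)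
  have ha : 0 < a := cdiv_pos hT₁.card_pos (by omega)
  have hra : 0 < r₁ * a := Nat.mul_pos hr₁ ha
  have hb : (b - 1) * r₂ < G.rank - r₁ * a := cdiv_sub_one_mul_lt (by omega) (by omega)
  have hb₁ : 1 ≤ b := cdiv_pos (by omega) (by omega)
  obtain ⟨W₁, hW₁rk, hW₁⟩ :=
    hloc₁.locallyExtendable.exists_colRank_le_of_lt_card (by omega) a h2
  obtain ⟨W, c, hcb, hc, hWrk, hW⟩ :=
    ((hloc₁.locallyExtendable.mono hr hδ).union hloc₂.locallyExtendable).exists_extension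
      W₁ (b - 1)
  have hWk : colRank G W < G.rank := by
    have := Nat.mul_le_mul_right r₂ hcb
    rw [mul_comm] at hW₁rk
    omega
  obtain rfl : c = b - 1 := hc.resolve_right fun hTW => by
    rw [hcover, Finset.univ_subset_iff] at hTW
    rw [hTW, colRank_univ] at hWk
    exact lt_irrefl _ hWk
  have key : minDist (rowCode G) + G.rank + a * (δ₁ - 1) + (b - 1) * (δ₂ - 1) ≤ n + 1 := by
    have := minDist_add_rank_add_card_le hWk
    omega
  zify [hb₁, show 1 ≤ δ₁ by omega, show 1 ≤ δ₂ by omega] at key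
  linarith

/-- Theorem 3.1: Singleton-like bound for codes with two
`(rᵢ, δᵢ)`-localities. -/
theorem singleton_bound_two_localities {𝔽 : Type*} [Field 𝔽] {m n : ℕ}
    (G : Matrix (Fin m) (Fin n) 𝔽) (k d : ℕ)
    (hk : k = Module.finrank 𝔽 (rowCode G)) (hd : d = minDist (rowCode G))
    (T₁ T₂ : Finset (Fin n)) (n₁ n₂ r₁ r₂ δ₁ δ₂ : ℕ)
    (hdisj : Disjoint T₁ T₂) (hcover : T₁ ∪ T₂ = Finset.univ)
    (hn₁ : T₁.card = n₁) (hn₂ : T₂.card = n₂)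
    (hr : r₁ ≤ r₂) (hδ : δ₂ ≤ δ₁) (hδ₂ : 2 ≤ δ₂)
    (hloc₁ : hasLocality G T₁ r₁ δ₁) (hloc₂ : hasLocality G T₂ r₂ δ₂)
    (Δ : ℕ) (hΔ : Δ = cdiv n₁ (r₁ + δ₁ - 1) * (δ₁ - 1))
    (h1 : r₁ * cdiv n₁ (r₁ + δ₁ - 1) ≤ k - 1)
    (h2 : r₁ * cdiv (Δ - 1) (δ₁ - 1) + (Δ - 1) < n₁) :
    (d : ℤ) ≤ (n : ℤ) - k + 1 - (cdiv n₁ (r₁ + δ₁ - 1) : ℤ) * ((δ₁ : ℤ) - 1)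
      - ((cdiv (k - r₁ * cdiv n₁ (r₁ + δ₁ - 1)) r₂ : ℤ) - 1) * ((δ₂ : ℤ) - 1) :=
  singleton_bound_two_localities_general G k d hk hd T₁ T₂ n₁ r₁ r₂ δ₁ δ₂ hcover hn₁ hr hδ hδ₂ hloc₁
    hloc₂ Δ hΔ h1 h2
end

section
/- For an [n,k,d] code with two (r_i,δ_i)_{i∈{1,2}} localities: if r_1⌈n_1/(r_1+δ_1−1)⌉ ≥ k, then d ≤ n − k + 1 − (⌈k/r_1⌉ − 1)(δ_1 − 1). -/
open scoped Classical

/-!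
Grow a set `U ⊆ T₁` greedily: while some column of `T₁` lies outside the span of the columns
of `U`, add the whole local group `S` of that coordinate. Since any `δ₁ - 1` coordinates of `S`
are recovered from the others, at least `δ₁` of them are new and the rank grows by at most
`|S \ U| - (δ₁ - 1) ≤ r₁`. After `⌈k/r₁⌉ - 1` rounds, which fit in `T₁` by the hypothesis on
`n₁`, the columns of `U` have rank `< k` and `|U| ≥ rank + (⌈k/r₁⌉ - 1)(δ₁ - 1)`. Shortening
the code on `U` then gives a nonzero codeword of weight at most
`n - |U| - (k - rank) + 1`.
-/

lemma cdiv_sub_one_mul_le (a b : ℕ) : (cdiv a b - 1) * b ≤ a - 1 := by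
  have h := Nat.div_mul_le_self (a + b - 1) b
  rw [Nat.sub_one_mul]
  unfold cdiv
  omega

lemma cdiv_le_of_le_mul {a b c : ℕ} (h : a ≤ b * c) : cdiv a b ≤ c := by
  rcases Nat.eq_zero_or_pos b with rfl | hb
  · simp [cdiv]
  · exact (ceilDiv_le_iff_le_mul hb).2 h

section Columns

variable {𝔽 : Type*} [Field 𝔽] {m n : ℕ} (G : Matrix (Fin m) (Fin n) 𝔽)

noncomputable def colSpan (U : Finset (Fin n)) : Submodule 𝔽 (Fin m → 𝔽) :=
  Submodule.span 𝔽 ((fun j => fun t => G t j) '' ↑U)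

lemma colSpan_mono {U V : Finset (Fin n)} (h : U ⊆ V) : colSpan G U ≤ colSpan G V :=
  Submodule.span_mono (Set.image_mono h)

lemma colSpan_union (U V : Finset (Fin n)) :
    colSpan G (U ∪ V) = colSpan G U ⊔ colSpan G V := by
  rw [colSpan, Finset.coe_union, Set.image_union, Submodule.span_union]
  rfl

lemma colSpan_le_iff {U : Finset (Fin n)} {W : Submodule 𝔽 (Fin m → 𝔽)} :
    colSpan G U ≤ W ↔ ∀ j ∈ U, (fun t => G t j) ∈ W := by
  rw [colSpan, Submodule.span_le, Set.image_subset_iff]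
  rfl

lemma finrank_colSpan_le_card (U : Finset (Fin n)) :
    Module.finrank 𝔽 (colSpan G U) ≤ U.card := by
  rw [colSpan, ← Finset.coe_image]
  exact (finrank_span_finset_le_card _).trans Finset.card_image_le

lemma finrank_colSpan_union_le (U V : Finset (Fin n)) :
    Module.finrank 𝔽 (colSpan G (U ∪ V)) ≤ Module.finrank 𝔽 (colSpan G U) + V.card := by
  rw [colSpan_union]
  exact (Submodule.finrank_add_le_finrank_add_finrank _ _).trans
    (Nat.add_le_add_left (finrank_colSpan_le_card G V) _)

/-- Row rank equals column rank. -/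
lemma finrank_map_restrict_rowCode (U : Finset (Fin n)) :
    Module.finrank 𝔽 ((rowCode G).map (LinearMap.funLeft 𝔽 𝔽 (Subtype.val : U → Fin n)))
      = Module.finrank 𝔽 (colSpan G U) := by
  set M : Matrix (Fin m) U 𝔽 := fun t j => G t j
  have hrow : (rowCode G).map (LinearMap.funLeft 𝔽 𝔽 (Subtype.val : U → Fin n))
      = Submodule.span 𝔽 (Set.range M.row) := by
    rw [rowCode, Submodule.map_span, ← Set.range_comp]
    rfl
  have hcol : colSpan G U = Submodule.span 𝔽 (Set.range M.col) := by
    rw [colSpan, ← Subtype.range_val (s := (U : Set (Fin n))), ← Set.range_comp]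
    rfl
  rw [hrow, hcol, ← M.rank_eq_finrank_span_row, M.rank_eq_finrank_span_cols]

end Columns

section Shortening

variable {𝔽 : Type*} [Field 𝔽] {m n : ℕ} (G : Matrix (Fin m) (Fin n) 𝔽)

lemma exists_mem_rowCode_ne_zero_vanishing_on {V : Finset (Fin n)}
    (h : Module.finrank 𝔽 (colSpan G V) < Module.finrank 𝔽 (rowCode G)) :
    ∃ c ∈ rowCode G, c ≠ 0 ∧ ∀ j ∈ V, c j = 0 := by
  set φ := (LinearMap.funLeft 𝔽 𝔽 (Subtype.val : V → Fin n)).comp (rowCode G).subtype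
  have hker : LinearMap.ker φ ≠ ⊥ := by
    intro hbot
    have hrank := LinearMap.finrank_range_add_finrank_ker φ
    rw [hbot, finrank_bot, add_zero, LinearMap.range_comp, Submodule.range_subtype,
      finrank_map_restrict_rowCode] at hrank
    omega
  obtain ⟨c, hc, hc0⟩ := Submodule.exists_mem_ne_zero_of_ne_bot hker
  exact ⟨c, c.2, fun h => hc0 (Subtype.ext h),
    fun j hj => congrFun (LinearMap.mem_ker.1 hc) ⟨j, hj⟩⟩

lemma minDist_bot : minDist (⊥ : Submodule 𝔽 (Fin n → 𝔽)) = 0 := by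
  rw [minDist, Nat.sInf_eq_zero]
  exact Or.inr (Set.eq_empty_of_forall_notMem fun _ ⟨_, hc, hc0, _⟩ => hc0 hc)

lemma minDist_rowCode_add_card_le {V : Finset (Fin n)}
    (h : Module.finrank 𝔽 (colSpan G V) < Module.finrank 𝔽 (rowCode G)) :
    minDist (rowCode G) + V.card ≤ n := by
  obtain ⟨c, hc, hc0, hcV⟩ := exists_mem_rowCode_ne_zero_vanishing_on G h
  have hdisj : Disjoint (Finset.univ.filter fun j => c j ≠ 0) V :=
    Finset.disjoint_left.2 fun j hj hjV => (Finset.mem_filter.1 hj).2 (hcV j hjV)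
  calc minDist (rowCode G) + V.card ≤ wt c + V.card :=
        Nat.add_le_add_right (Nat.sInf_le (⟨c, hc, hc0, rfl⟩ : ∃ c ∈ rowCode G, _)) _
    _ = ((Finset.univ.filter fun j => c j ≠ 0) ∪ V).card :=
        (Finset.card_union_of_disjoint hdisj).symm
    _ ≤ n := (Finset.card_le_univ _).trans_eq (Fintype.card_fin n)

lemma finrank_rowCode_le_finrank_colSpan_add_card_compl (U : Finset (Fin n)) :
    Module.finrank 𝔽 (rowCode G) ≤ Module.finrank 𝔽 (colSpan G U) + Uᶜ.card := by
  by_contra! h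
  obtain ⟨c, -, hc0, hc⟩ := exists_mem_rowCode_ne_zero_vanishing_on G
    ((finrank_colSpan_union_le G U Uᶜ).trans_lt h)
  exact hc0 (funext fun j => hc j (by simp))

/-- Pad `U` with `k - rank U - 1` further coordinates: some nonzero codeword still vanishes on
all of them. -/
theorem minDist_rowCode_add_card_add_finrank_le (U : Finset (Fin n))
    (h : Module.finrank 𝔽 (colSpan G U) < Module.finrank 𝔽 (rowCode G)) :
    minDist (rowCode G) + U.card + Module.finrank 𝔽 (rowCode G)
      ≤ n + 1 + Module.finrank 𝔽 (colSpan G U) := by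
  obtain ⟨W, hWU, hW⟩ := Finset.exists_subset_card_eq (s := Uᶜ)
    (n := Module.finrank 𝔽 (rowCode G) - Module.finrank 𝔽 (colSpan G U) - 1)
    (by have := finrank_rowCode_le_finrank_colSpan_add_card_compl G U; omega)
  have hd := minDist_rowCode_add_card_le G
    ((finrank_colSpan_union_le G U W).trans_lt (by omega))
  rw [Finset.card_union_of_disjoint (Finset.disjoint_of_subset_right hWU disjoint_compl_right)]
    at hd
  omega

end Shortening

section Locality

variable {𝔽 : Type*} [Field 𝔽] {m n : ℕ} (G : Matrix (Fin m) (Fin n) 𝔽)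

def RecoversErasures (S : Finset (Fin n)) (δ : ℕ) : Prop :=
  ∀ E ⊆ S, E.card = δ - 1 → ∀ j ∈ E, regenSet G j ((S \ E) ∪ {j})

lemma colSpan_le_colSpan_sdiff {S E : Finset (Fin n)} {δ : ℕ}
    (hS : RecoversErasures G S δ)
    (hES : E ⊆ S) (hE : E.card = δ - 1) : colSpan G S ≤ colSpan G (S \ E) := by
  refine (colSpan_le_iff G).2 fun j hj => ?_
  by_cases hjE : j ∈ E
  · have hspan := (hS E hES hE j hjE).2
    rwa [Finset.union_comm, ← Finset.insert_eq, Finset.erase_insert (by simp [hjE])] at hspan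
  · exact Submodule.subset_span ⟨j, Finset.mem_sdiff.2 ⟨hj, hjE⟩, rfl⟩

lemma colSpan_le_of_card_sdiff_le {S U : Finset (Fin n)} {δ : ℕ}
    (hS : RecoversErasures G S δ)
    (hδS : δ - 1 ≤ S.card) (hSU : (S \ U).card ≤ δ - 1) : colSpan G S ≤ colSpan G U := by
  obtain ⟨E, hSUE, hES, hE⟩ := Finset.exists_subsuperset_card_eq Finset.sdiff_subset hSU hδS
  refine (colSpan_le_colSpan_sdiff G hS hES hE).trans (colSpan_mono G fun x hx => ?_)
  by_contra hxU
  exact (Finset.mem_sdiff.1 hx).2 (hSUE (Finset.mem_sdiff.2 ⟨(Finset.mem_sdiff.1 hx).1, hxU⟩))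

lemma finrank_colSpan_union_add_le {S U : Finset (Fin n)} {δ : ℕ}
    (hS : RecoversErasures G S δ)
    (hSU : δ - 1 ≤ (S \ U).card) :
    Module.finrank 𝔽 (colSpan G (U ∪ S)) + (δ - 1)
      ≤ Module.finrank 𝔽 (colSpan G U) + (S \ U).card := by
  obtain ⟨E, hE, hEcard⟩ := Finset.exists_subset_card_eq hSU
  have hle : colSpan G (U ∪ S) ≤ colSpan G (U ∪ ((S \ U) \ E)) := by
    rw [colSpan_union G U S]
    refine sup_le (colSpan_mono G Finset.subset_union_left)
      ((colSpan_le_colSpan_sdiff G hS (hE.trans Finset.sdiff_subset) hEcard).trans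
        (colSpan_mono G fun x hx => ?_))
    simp only [Finset.mem_union, Finset.mem_sdiff] at hx ⊢
    tauto
  have hrank := (Submodule.finrank_mono hle).trans (finrank_colSpan_union_le G U _)
  rw [Finset.card_sdiff_of_subset hE, hEcard] at hrank
  omega

lemma exists_extension_of_not_colSpan_le {T U : Finset (Fin n)} {r δ : ℕ}
    (hloc : hasLocality G T r δ) (hUT : U ⊆ T) (hTU : ¬colSpan G T ≤ colSpan G U) :
    ∃ V ⊆ T, Module.finrank 𝔽 (colSpan G V) ≤ Module.finrank 𝔽 (colSpan G U) + r ∧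
      Module.finrank 𝔽 (colSpan G V) + (δ - 1) + U.card
        ≤ Module.finrank 𝔽 (colSpan G U) + V.card := by
  obtain ⟨ι, hιT, hι⟩ : ∃ ι ∈ T, (fun t => G t ι) ∉ colSpan G U := by
    simpa [colSpan_le_iff] using hTU
  obtain ⟨S, hST, hιS, hδS, hSr, hS⟩ := hloc ι hιT
  have hnew : δ - 1 < (S \ U).card := by
    by_contra! h
    exact hι (colSpan_le_of_card_sdiff_le G hS (by omega) h ((colSpan_le_iff G).1 le_rfl ι hιS))
  have hrank := finrank_colSpan_union_add_le G hS hnew.le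
  have hcard : (U ∪ S).card = U.card + (S \ U).card := by
    rw [← Finset.card_union_of_disjoint Finset.disjoint_sdiff, Finset.union_sdiff_self_eq_union]
  have hSU := Finset.card_le_card (Finset.sdiff_subset : S \ U ⊆ S)
  exact ⟨U ∪ S, Finset.union_subset hUT hST, by omega, by omega⟩

theorem exists_subset_finrank_colSpan_add_le {T : Finset (Fin n)} {r δ : ℕ}
    (hloc : hasLocality G T r δ) (hδ : 1 ≤ δ) :
    ∀ s, s * (r + δ - 1) ≤ T.card → ∃ U ⊆ T, Module.finrank 𝔽 (colSpan G U) ≤ s * r ∧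
      Module.finrank 𝔽 (colSpan G U) + s * (δ - 1) ≤ U.card
  | 0, _ => ⟨∅, Finset.empty_subset T, by simpa using finrank_colSpan_le_card G ∅⟩
  | s + 1, hs => by
    have hmul : ∀ t, t * (r + δ - 1) = t * r + t * (δ - 1) := fun t => by
      rw [Nat.add_sub_assoc hδ, Nat.mul_add]
    have hsr := Nat.add_one_mul s r
    have hsδ := Nat.add_one_mul s (δ - 1)
    have hs' := hmul (s + 1)
    obtain ⟨U, hUT, hUr, hU⟩ :=
      exists_subset_finrank_colSpan_add_le hloc hδ s (by rw [hmul]; omega)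
    by_cases hTU : colSpan G T ≤ colSpan G U
    · have hT := Submodule.finrank_mono hTU
      exact ⟨T, subset_rfl, by omega, by omega⟩
    · obtain ⟨V, hVT, hVr, hV⟩ := exists_extension_of_not_colSpan_le G hloc hUT hTU
      exact ⟨V, hVT, by omega, by omega⟩

end Locality

theorem singleton_bound_two_localities_degenerate_general {𝔽 : Type*} [Field 𝔽] {m n : ℕ}
    (G : Matrix (Fin m) (Fin n) 𝔽) (k d : ℕ)
    (hk : k = Module.finrank 𝔽 (rowCode G)) (hd : d = minDist (rowCode G))
    (T₁ : Finset (Fin n)) (n₁ r₁ δ₁ δ₂ : ℕ)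
    (hn₁ : T₁.card = n₁)
    (hδ : δ₂ ≤ δ₁) (hδ₂ : 2 ≤ δ₂)
    (hloc₁ : hasLocality G T₁ r₁ δ₁)
    (h1 : k ≤ r₁ * cdiv n₁ (r₁ + δ₁ - 1)) :
    (d : ℤ) ≤ (n : ℤ) - k + 1 - ((cdiv k r₁ : ℤ) - 1) * ((δ₁ : ℤ) - 1) := by
  have hδ₁ : 1 ≤ δ₁ := by omega
  rcases Nat.eq_zero_or_pos k with rfl | hk0
  · have hd0 : d = 0 := by
      rw [hd, Submodule.finrank_eq_zero.1 hk.symm, minDist_bot]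
    have hcdiv : cdiv 0 r₁ = 0 := zero_ceilDiv r₁
    rw [hd0, hcdiv]
    push_cast
    omega
  have hr₁ : 0 < r₁ := Nat.pos_of_ne_zero fun h => by simp [h] at h1; omega
  have hak : (cdiv k r₁ - 1) * r₁ < k := (cdiv_sub_one_mul_le k r₁).trans_lt (by omega)
  have hfit : (cdiv k r₁ - 1) * (r₁ + δ₁ - 1) ≤ T₁.card :=
    calc (cdiv k r₁ - 1) * (r₁ + δ₁ - 1)
        ≤ (cdiv n₁ (r₁ + δ₁ - 1) - 1) * (r₁ + δ₁ - 1) :=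
          Nat.mul_le_mul_right _ (Nat.sub_le_sub_right (cdiv_le_of_le_mul h1) 1)
      _ ≤ n₁ := (cdiv_sub_one_mul_le _ _).trans (Nat.sub_le _ _)
      _ = T₁.card := hn₁.symm
  obtain ⟨U, -, hUr, hU⟩ := exists_subset_finrank_colSpan_add_le G hloc₁ hδ₁ _ hfit
  have hshort := minDist_rowCode_add_card_add_finrank_le G U (by omega)
  rw [← hk, ← hd] at hshort
  have hcdiv : 1 ≤ cdiv k r₁ := Nat.div_pos (by omega) hr₁
  have hnat : d + k + (cdiv k r₁ - 1) * (δ₁ - 1) ≤ n + 1 := by omega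
  zify [hcdiv, hδ₁] at hnat
  linarith

/-- if `r₁⌈n₁/(r₁+δ₁−1)⌉ ≥ k`, then
`d ≤ n − k + 1 − (⌈k/r₁⌉ − 1)(δ₁ − 1)`. -/
theorem singleton_bound_two_localities_degenerate {𝔽 : Type*} [Field 𝔽] {m n : ℕ}
    (G : Matrix (Fin m) (Fin n) 𝔽) (k d : ℕ)
    (hk : k = Module.finrank 𝔽 (rowCode G)) (hd : d = minDist (rowCode G))
    (T₁ T₂ : Finset (Fin n)) (n₁ n₂ r₁ r₂ δ₁ δ₂ : ℕ)
    (hdisj : Disjoint T₁ T₂) (hcover : T₁ ∪ T₂ = Finset.univ)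
    (hn₁ : T₁.card = n₁) (hn₂ : T₂.card = n₂)
    (hr : r₁ ≤ r₂) (hδ : δ₂ ≤ δ₁) (hδ₂ : 2 ≤ δ₂)
    (hloc₁ : hasLocality G T₁ r₁ δ₁) (hloc₂ : hasLocality G T₂ r₂ δ₂)
    (h1 : k ≤ r₁ * cdiv n₁ (r₁ + δ₁ - 1)) :
    (d : ℤ) ≤ (n : ℤ) - k + 1 - ((cdiv k r₁ : ℤ) - 1) * ((δ₁ : ℤ) - 1) :=
  singleton_bound_two_localities_degenerate_general G k d hk hd T₁ n₁ r₁ δ₁ δ₂ hn₁ hδ hδ₂ hloc₁ h1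
end

section
/- For δ_1 > 2, the condition r_1⌈(Δ−1)/(δ_1−1)⌉ + (Δ−1) < n_1 with Δ = ⌈n_1/(r_1+δ_1−1)⌉(δ_1−1) holds if and only if (r_1+δ_1−1) divides n_1 (assuming n_1 ≥ 1, r_1 ≥ 1). -/
open scoped Classical

theorem le_mul_cdiv {b : ℕ} (hb : 0 < b) (a : ℕ) : a ≤ b * cdiv a b :=
  le_smul_ceilDiv hb

theorem mul_cdiv_le_iff_dvd {a b : ℕ} (hb : 0 < b) : b * cdiv a b ≤ a ↔ b ∣ a := by
  constructor
  · intro h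
    exact ⟨cdiv a b, (le_antisymm h (le_mul_cdiv hb a)).symm⟩
  · rintro ⟨k, rfl⟩
    rw [cdiv_eq_ceilDiv, ← smul_eq_mul b k, smul_ceilDiv hb, smul_eq_mul]

theorem cdiv_mul_sub_one {d : ℕ} (hd : 2 ≤ d) (q : ℕ) : cdiv (q * d - 1) d = q := by
  unfold cdiv
  apply Nat.div_eq_of_lt_le
  · omega
  · rw [Nat.add_mul, one_mul]
    omega

theorem condition_iff_dvd_general (n₁ r₁ δ₁ : ℕ) (hn : 1 ≤ n₁) (hδ : 2 < δ₁) :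
    (r₁ * cdiv (cdiv n₁ (r₁ + δ₁ - 1) * (δ₁ - 1) - 1) (δ₁ - 1)
        + (cdiv n₁ (r₁ + δ₁ - 1) * (δ₁ - 1) - 1) < n₁)
      ↔ (r₁ + δ₁ - 1) ∣ n₁ := by
  obtain ⟨d, rfl⟩ : ∃ d, δ₁ = d + 1 := ⟨δ₁ - 1, by omega⟩
  simp only [Nat.add_sub_cancel, ← Nat.add_assoc]
  rw [cdiv_mul_sub_one (by omega), ← mul_cdiv_le_iff_dvd (by omega)]
  have hn_le : n₁ ≤ (r₁ + d) * cdiv n₁ (r₁ + d) := le_mul_cdiv (by omega) n₁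
  set q := cdiv n₁ (r₁ + d)
  have hq : 1 ≤ q := Nat.pos_of_ne_zero fun h => by rw [h, Nat.mul_zero] at hn_le; omega
  have hqd : q ≤ q * d := Nat.le_mul_of_pos_right q (by omega)
  rw [Nat.add_mul, Nat.mul_comm d q]
  omega

/-- for `δ₁ > 2`, the condition `r₁⌈(Δ−1)/(δ₁−1)⌉ + (Δ−1) < n₁` with
`Δ = ⌈n₁/(r₁+δ₁−1)⌉(δ₁−1)` holds iff `(r₁+δ₁−1) ∣ n₁`. -/
theorem condition_iff_dvd (n₁ r₁ δ₁ : ℕ) (hn : 1 ≤ n₁) (hr : 1 ≤ r₁) (hδ : 2 < δ₁) :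
    (r₁ * cdiv (cdiv n₁ (r₁ + δ₁ - 1) * (δ₁ - 1) - 1) (δ₁ - 1)
        + (cdiv n₁ (r₁ + δ₁ - 1) * (δ₁ - 1) - 1) < n₁)
      ↔ (r₁ + δ₁ - 1) ∣ n₁ :=
  condition_iff_dvd_general n₁ r₁ δ₁ hn hδ
end
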